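/- arXiv:1708.01330 — 4 statements merged into one kernel-verified Lean document; each statement's English description precedes it below -/
import Mathlib

section
/- Let Λ be a unital R-algebra, H a subgroup of a group G acting globally on Λ (written h·a for h ∈ H, a ∈ Λ), and let α be the extension by zero of this H-action to G. Let T be a left transversal of H in G with e ∈ T, and for g ∈ G and t ∈ T let j(g,t) ∈ T and h(g,t) ∈ H be the unique elements with g·t = j(g,t)·h(g,t). Let Γ = ⨁_{t∈T} Λ (finitely supported functions T → Λ with componentwise operations), and for g ∈ G let β_g : Γ → Γ be the R-algebra map sending the element with component λ ∈ Λ in position t and 0 elsewhere to the element with component h(g,t)·λ in position j(g,t) and 0 elsewhere. Then each β_g is an R-algebra automorphism of Γ, β : G → Aut_R(Γ) is a group homomorphism, and (Γ, β), together with the embedding φ : Λ → Γ of Λ as the component at e, is an enveloping action of (Λ, α). -/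
/-!
Since `T` is a left transversal of `H`, the factorization `g * t = j g t * h g t` is unique.
Hence `j` is an action of `G` on `T` and `h` is a cocycle,
`h (g₁ * g₂) t = h g₁ (j g₂ t) * h g₂ t`, which makes `β` an action of `G`. Each `β g` moves the
components along the injective map `j g` and twists each one by an algebra automorphism, so it
respects the pointwise product. The component at `1` is an ideal and `β t` carries it onto the
component at `t`, so its translates span. For `g ∈ H`, `β g` acts on it by `ρ g`; for `g ∉ H`,
`β g` moves it to the component at `j g 1 ≠ 1`, which meets it only in `0`.
-/

/-- `(L, β)` together with the embedding `φ : Λ → L` is an enveloping action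
(globalization) of the partial action `(S, θ)` of `G` on the `R`-algebra `Λ`:
`β` is a global action of `G` on `L` by `R`-algebra automorphisms, `φ` is an
injective homomorphism of `R`-algebras whose range is an ideal of `L`,
`L = Σ_g β g (φ(Λ))`, `φ(S g) = φ(Λ) ∩ β g (φ(Λ))`, and `φ ∘ θ g = β g ∘ φ`
on `S (g⁻¹)`. -/
structure IsEnvelopingAction (R : Type*) (G : Type*) (Λ : Type*) (L : Type*)
    [CommRing R] [Group G] [Ring Λ] [Algebra R Λ]
    [NonUnitalNonAssocSemiring L] [Module R L]
    (S : G → Set Λ) (θ : G → Λ → Λ) (β : G → L → L) (φ : Λ → L) : Prop where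
  β_one : ∀ x : L, β 1 x = x
  β_comp : ∀ (g h : G) (x : L), β g (β h x) = β (g * h) x
  β_add : ∀ (g : G) (x y : L), β g (x + y) = β g x + β g y
  β_mul : ∀ (g : G) (x y : L), β g (x * y) = β g x * β g y
  β_smul : ∀ (g : G) (r : R) (x : L), β g (r • x) = r • β g x
  β_bijective : ∀ g : G, Function.Bijective (β g)
  φ_injective : Function.Injective φ
  φ_add : ∀ x y : Λ, φ (x + y) = φ x + φ y
  φ_mul : ∀ x y : Λ, φ (x * y) = φ x * φ y
  φ_smul : ∀ (r : R) (x : Λ), φ (r • x) = r • φ x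
  ideal_mul_left : ∀ a : L, ∀ x ∈ Set.range φ, a * x ∈ Set.range φ
  ideal_mul_right : ∀ a : L, ∀ x ∈ Set.range φ, x * a ∈ Set.range φ
  spans : AddSubmonoid.closure (⋃ g : G, β g '' Set.range φ) = (⊤ : AddSubmonoid L)
  intersect : ∀ g : G, φ '' S g = Set.range φ ∩ β g '' Set.range φ
  equivariant : ∀ g : G, ∀ a ∈ S (g⁻¹), φ (θ g a) = β g (φ a)

open Function Finsupp

namespace Finsupp

variable {R Λ ι κ : Type*} [CommSemiring R] [Semiring Λ] [Algebra R Λ]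

noncomputable def twistedMapDomain (J : ι → κ) (σ : ι → Λ →ₐ[R] Λ) :
    (ι →₀ Λ) →ₗ[R] (κ →₀ Λ) :=
  lsum R fun t => (lsingle (J t)).comp (σ t).toLinearMap

@[simp]
theorem twistedMapDomain_single (J : ι → κ) (σ : ι → Λ →ₐ[R] Λ) (t : ι) (a : Λ) :
    twistedMapDomain J σ (single t a) = single (J t) (σ t a) := by
  simp [twistedMapDomain]

theorem single_mul_single_of_ne {t s : ι} (hts : t ≠ s) (a b : Λ) :
    single t a * single s b = 0 := by
  ext u
  rw [mul_apply, zero_apply]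
  rcases eq_or_ne t u with rfl | hu
  · rw [single_eq_of_ne' hts.symm, mul_zero]
  · rw [single_eq_of_ne' hu, zero_mul]

theorem twistedMapDomain_mul {J : ι → κ} (hJ : Injective J) (σ : ι → Λ →ₐ[R] Λ)
    (x y : ι →₀ Λ) :
    twistedMapDomain J σ (x * y) = twistedMapDomain J σ x * twistedMapDomain J σ y := by
  induction x using induction_linear with
  | zero => simp
  | add x₁ x₂ hx₁ hx₂ => simp only [add_mul, map_add, hx₁, hx₂]
  | single t a =>
    induction y using induction_linear with
    | zero => simp
    | add y₁ y₂ hy₁ hy₂ => simp only [mul_add, map_add, hy₁, hy₂]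
    | single s b =>
      rcases eq_or_ne t s with rfl | hts
      · simp only [← single_mul, twistedMapDomain_single, map_mul]
      · rw [single_mul_single_of_ne hts, map_zero, twistedMapDomain_single,
          twistedMapDomain_single, single_mul_single_of_ne (hJ.ne hts)]

theorem single_mul_eq_single (t : ι) (a : Λ) (x : ι →₀ Λ) :
    single t a * x = single t (a * x t) := by
  ext u
  rcases eq_or_ne t u with rfl | hu
  · simp
  · simp [single_eq_of_ne' hu]

theorem mul_single_eq_single (t : ι) (a : Λ) (x : ι →₀ Λ) :
    x * single t a = single t (x t * a) := by
  ext u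
  rcases eq_or_ne t u with rfl | hu
  · simp
  · simp [single_eq_of_ne' hu]

end Finsupp

structure IsTransversalDecomposition {G : Type*} [Group G] (H : Subgroup G) (T : Set G)
    (j : G → T → T) (h : G → T → H) : Prop where
  isComplement : Subgroup.IsComplement T (H : Set G)
  mul_eq : ∀ (g : G) (t : T), g * (t : G) = j g t * h g t

namespace IsTransversalDecomposition

variable {G : Type*} [Group G] {H : Subgroup G} {T : Set G} {j : G → T → T} {h : G → T → H}

theorem eq_of_mul_eq (hd : IsTransversalDecomposition H T j h) {g : G} {t t' : T} {η : H}
    (he : g * (t : G) = t' * η) : j g t = t' ∧ h g t = η :=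
  Prod.ext_iff.1 <| hd.isComplement.1 (a₁ := (j g t, h g t)) (a₂ := (t', η))
    ((hd.mul_eq g t).symm.trans he)

theorem one_apply (hd : IsTransversalDecomposition H T j h) (t : T) : j 1 t = t ∧ h 1 t = 1 :=
  hd.eq_of_mul_eq (by simp)

theorem mul_apply (hd : IsTransversalDecomposition H T j h) (g₁ g₂ : G) (t : T) :
    j (g₁ * g₂) t = j g₁ (j g₂ t) ∧ h (g₁ * g₂) t = h g₁ (j g₂ t) * h g₂ t :=
  hd.eq_of_mul_eq <| by
    rw [Subgroup.coe_mul, mul_assoc g₁, hd.mul_eq g₂ t, ← mul_assoc, hd.mul_eq g₁, mul_assoc]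

theorem j_injective (hd : IsTransversalDecomposition H T j h) (g : G) : Injective (j g) :=
  LeftInverse.injective (g := j g⁻¹) fun t => by
    rw [← (hd.mul_apply _ _ t).1, inv_mul_cancel, (hd.one_apply t).1]

variable (h1T : (1 : G) ∈ T)

theorem coe_apply_one (hd : IsTransversalDecomposition H T j h) (t : T) :
    j t ⟨1, h1T⟩ = t ∧ h t ⟨1, h1T⟩ = 1 :=
  hd.eq_of_mul_eq (by simp)

theorem apply_one_of_mem (hd : IsTransversalDecomposition H T j h) {g : G} (hg : g ∈ H) :
    j g ⟨1, h1T⟩ = ⟨1, h1T⟩ ∧ h g ⟨1, h1T⟩ = ⟨g, hg⟩ :=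
  hd.eq_of_mul_eq (by simp)

theorem j_apply_one_ne_of_notMem (hd : IsTransversalDecomposition H T j h) {g : G}
    (hg : g ∉ H) : j g ⟨1, h1T⟩ ≠ ⟨1, h1T⟩ := by
  intro hj
  have hgh := hd.mul_eq g ⟨1, h1T⟩
  rw [hj, mul_one, one_mul] at hgh
  exact hg (hgh ▸ (h g _).2)

end IsTransversalDecomposition

section InducedAction

variable {R G Λ : Type*} [CommSemiring R] [Group G] [Semiring Λ] [Algebra R Λ] {H : Subgroup G}
  {T : Set G} (j : G → T → T) (h : G → T → H) (ρ : H →* (Λ ≃ₐ[R] Λ))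

noncomputable def inducedAction (g : G) : (T →₀ Λ) →ₗ[R] (T →₀ Λ) :=
  twistedMapDomain (j g) fun t => ρ (h g t)

@[simp]
theorem inducedAction_single (g : G) (t : T) (a : Λ) :
    inducedAction j h ρ g (single t a) = single (j g t) (ρ (h g t) a) :=
  twistedMapDomain_single _ _ t a

variable {j h}

theorem inducedAction_one (hd : IsTransversalDecomposition H T j h) :
    inducedAction j h ρ 1 = LinearMap.id :=
  lhom_ext fun t a => by simp [hd.one_apply t]

theorem inducedAction_mul (hd : IsTransversalDecomposition H T j h) (g₁ g₂ : G) :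
    inducedAction j h ρ (g₁ * g₂) = inducedAction j h ρ g₁ ∘ₗ inducedAction j h ρ g₂ :=
  lhom_ext fun t a => by simp [hd.mul_apply g₁ g₂ t]

theorem inducedAction_apply_mul (hd : IsTransversalDecomposition H T j h) (g : G)
    (x y : T →₀ Λ) :
    inducedAction j h ρ g (x * y) = inducedAction j h ρ g x * inducedAction j h ρ g y :=
  twistedMapDomain_mul (hd.j_injective g) _ x y

theorem inducedAction_bijective (hd : IsTransversalDecomposition H T j h) (g : G) :
    Bijective (inducedAction j h ρ g) := by
  have hinv : ∀ g' : G, inducedAction j h ρ g' ∘ₗ inducedAction j h ρ g'⁻¹ = LinearMap.id :=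
    fun g' => by rw [← inducedAction_mul ρ hd, mul_inv_cancel, inducedAction_one ρ hd]
  refine bijective_iff_has_inverse.2 ⟨inducedAction j h ρ g⁻¹, fun x => ?_, fun x => ?_⟩
  · simpa using LinearMap.congr_fun (hinv g⁻¹) x
  · exact LinearMap.congr_fun (hinv g) x

variable (h1T : (1 : G) ∈ T)

theorem closure_iUnion_inducedAction_image_range_single
    (hd : IsTransversalDecomposition H T j h) :
    AddSubmonoid.closure (⋃ g : G, inducedAction j h ρ g '' Set.range (single ⟨1, h1T⟩)) = ⊤ := by
  rw [eq_top_iff]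
  rintro x -
  induction x using induction_linear with
  | zero => exact zero_mem _
  | add x₁ x₂ hx₁ hx₂ => exact add_mem hx₁ hx₂
  | single t a =>
    refine AddSubmonoid.subset_closure (Set.mem_iUnion.2 ⟨t, single ⟨1, h1T⟩ a, ⟨a, rfl⟩, ?_⟩)
    simp [hd.coe_apply_one h1T t]

theorem inducedAction_single_one_of_mem (hd : IsTransversalDecomposition H T j h) {g : G}
    (hg : g ∈ H) (a : Λ) :
    inducedAction j h ρ g (single ⟨1, h1T⟩ a) = single ⟨1, h1T⟩ (ρ ⟨g, hg⟩ a) := by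
  simp [hd.apply_one_of_mem h1T hg]

theorem inducedAction_image_range_single_one_of_mem (hd : IsTransversalDecomposition H T j h)
    {g : G} (hg : g ∈ H) :
    inducedAction j h ρ g '' Set.range (single ⟨1, h1T⟩) = Set.range (single ⟨1, h1T⟩) := by
  rw [← Set.range_comp]
  simp only [comp_def, inducedAction_single_one_of_mem ρ h1T hd hg]
  exact (ρ ⟨g, hg⟩).surjective.range_comp (single _)

theorem range_single_inter_inducedAction_image_of_notMem
    (hd : IsTransversalDecomposition H T j h) {g : G} (hg : g ∉ H) :
    Set.range (single ⟨1, h1T⟩) ∩ inducedAction j h ρ g '' Set.range (single ⟨1, h1T⟩) =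
      {(0 : T →₀ Λ)} := by
  refine Set.eq_singleton_iff_unique_mem.2
    ⟨⟨⟨0, single_zero _⟩, 0, ⟨0, single_zero _⟩, map_zero _⟩, ?_⟩
  rintro _ ⟨⟨a, rfl⟩, _, ⟨b, rfl⟩, hab⟩
  obtain rfl : a = 0 := by
    simpa [single_eq_of_ne' (hd.j_apply_one_ne_of_notMem h1T hg)] using
      (DFunLike.congr_fun hab ⟨1, h1T⟩).symm
  exact single_zero _

end InducedAction

open Classical in
/-- Let `H ≤ G` act globally on the unital `R`-algebra `Λ` via
`ρ`, let `α` be the extension by zero of this action to `G`, let `T` be a left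
transversal of `H` in `G` containing `1`, and factor `g * t = j g t * h g t`
with `j g t ∈ T`, `h g t ∈ H`. Let `Γ = ⨁_{t ∈ T} Λ` (finitely supported
functions) and let `β g` send the single-component element `single t λ` to
`single (j g t) (ρ (h g t) λ)`. Then `(Γ, β)`, with the embedding of `Λ` as the
component at `1 ∈ T`, is an enveloping action of `(Λ, α)`; in particular each
`β g` is an `R`-algebra automorphism of `Γ` and `β` is a group homomorphism. -/
theorem statement5 {R G Λ : Type*} [CommRing R] [Group G] [Ring Λ] [Algebra R Λ]
    (H : Subgroup G) (ρ : H →* (Λ ≃ₐ[R] Λ))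
    (T : Set G) (h1T : (1 : G) ∈ T)
    (htrans : ∀ g : G, ∃! t : T, (t : G)⁻¹ * g ∈ H)
    (j : G → T → T) (h : G → T → H)
    (hjh : ∀ (g : G) (t : T), g * (t : G) = (j g t : G) * ((h g t : G)))
    (β : G → (↥T →₀ Λ) → (↥T →₀ Λ))
    (hβ : ∀ (g : G) (f : ↥T →₀ Λ),
      β g f = f.sum fun t lam => Finsupp.single (j g t) (ρ (h g t) lam)) :
    IsEnvelopingAction R G Λ (↥T →₀ Λ)
      (fun g => if g ∈ H then Set.univ else {0})
      (fun g => if hg : g ∈ H then ⇑(ρ ⟨g, hg⟩) else 0)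
      β (fun lam => Finsupp.single ⟨1, h1T⟩ lam) := by
  have hd : IsTransversalDecomposition H T j h :=
    ⟨Subgroup.isComplement_iff_existsUnique_inv_mul_mem.2 htrans, hjh⟩
  obtain rfl : β = fun g => ⇑(inducedAction j h ρ g) := funext fun g => funext (hβ g)
  refine
  { β_one := LinearMap.congr_fun (inducedAction_one ρ hd)
    β_comp := fun g₁ g₂ x => (LinearMap.congr_fun (inducedAction_mul ρ hd g₁ g₂) x).symm
    β_add := fun g => map_add _
    β_mul := inducedAction_apply_mul ρ hd
    β_smul := fun g => map_smul _
    β_bijective := inducedAction_bijective ρ hd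
    φ_injective := single_injective _
    φ_add := single_add _
    φ_mul := single_mul _
    φ_smul := fun r a => (smul_single r _ a).symm
    ideal_mul_left := by rintro x _ ⟨a, rfl⟩; exact ⟨_, (mul_single_eq_single _ a x).symm⟩
    ideal_mul_right := by rintro x _ ⟨a, rfl⟩; exact ⟨_, (single_mul_eq_single _ a x).symm⟩
    spans := closure_iUnion_inducedAction_image_range_single ρ h1T hd
    intersect := fun g => by
      by_cases hg : g ∈ H
      · simp [hg, inducedAction_image_range_single_one_of_mem ρ h1T hd hg]
      · simp [hg, range_single_inter_inducedAction_image_of_notMem ρ h1T hd hg]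
    equivariant := fun g a ha => by
      by_cases hg : g ∈ H
      · simp [hg, inducedAction_single_one_of_mem ρ h1T hd hg]
      · obtain rfl : a = 0 := by simpa [hg] using ha
        simp [hg] }
end

section
/- Let Λ be a unital R-algebra, H a subgroup of a group G acting globally on Λ (written h·a), T a left transversal of H in G with e ∈ T, and j(g,t) ∈ T, h(g,t) ∈ H defined by g·t = j(g,t)·h(g,t). Let Γ = ⨁_{t∈T} Λ and define β_g : Γ → Γ by sending the element with component λ in position t and 0 elsewhere to the element with component h(g,t)·λ in position j(g,t) and 0 elsewhere. Then β_e is the identity of Γ and β_g ∘ β_t = β_{gt} for all g, t ∈ G; that is, β defines a global action of G on Γ. -/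
/-!
Uniqueness of the factorization `g = t * h` (`t ∈ T`, `h ∈ H`) makes `j` and `h` satisfy
`j 1 t = t`, `h 1 t = 1` and the cocycle identities `j (g * g') t = j g (j g' t)`,
`h (g * g') t = h g (j g' t) * h g' t`, obtained by factoring `g * g' * t` in two ways.
Since `β g` moves the `t`-component to position `j g t` and twists it by `ρ (h g t)`, these
identities are exactly `β 1 = id` and `β g ∘ β g' = β (g * g')`.
-/

theorem Finsupp.sum_sum_single_sum_single {ι κ ν M N P F F' : Type*}
    [AddCommMonoid M] [AddCommMonoid N] [AddCommMonoid P]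
    [FunLike F M N] [AddMonoidHomClass F M N] [FunLike F' N P] [AddMonoidHomClass F' N P]
    (j : ι → κ) (φ : ι → F) (j' : κ → ν) (φ' : κ → F') (f : ι →₀ M) :
    ((f.sum fun i a => single (j i) (φ i a)).sum fun k b => single (j' k) (φ' k b)) =
      f.sum fun i a => single (j' (j i)) (φ' (j i) (φ i a)) := by
  rw [sum_sum_index (fun _ => by simp) (fun _ _ _ => by simp [single_add])]
  exact sum_congr fun i _ => sum_single_index (by simp)

section Transversal

variable {G : Type*} [Group G] {H : Subgroup G} {T : Set G}

theorem transversal_factorization_unique (htrans : ∀ g : G, ∃! t : T, (t : G)⁻¹ * g ∈ H)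
    {a b : T} {x y : H} (hxy : (a : G) * x = b * y) : a = b ∧ x = y := by
  obtain rfl : a = b := (htrans (a * x)).unique (by simp) (by rw [hxy]; simp)
  exact ⟨rfl, Subtype.ext (mul_left_cancel hxy)⟩

variable {j : G → T → T} {h : G → T → H}

theorem transversal_factor_one (htrans : ∀ g : G, ∃! t : T, (t : G)⁻¹ * g ∈ H)
    (hjh : ∀ (g : G) (t : T), g * (t : G) = (j g t : G) * ((h g t : G))) (t : T) :
    j 1 t = t ∧ h 1 t = 1 :=
  transversal_factorization_unique htrans (by rw [← hjh, one_mul, OneMemClass.coe_one, mul_one])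

theorem transversal_factor_mul (htrans : ∀ g : G, ∃! t : T, (t : G)⁻¹ * g ∈ H)
    (hjh : ∀ (g : G) (t : T), g * (t : G) = (j g t : G) * ((h g t : G))) (g g' : G) (t : T) :
    j (g * g') t = j g (j g' t) ∧ h (g * g') t = h g (j g' t) * h g' t :=
  transversal_factorization_unique htrans
    (by rw [← hjh, mul_assoc, hjh g' t, ← mul_assoc, hjh g, mul_assoc, Subgroup.coe_mul])

end Transversal

theorem statement7_general {R G Λ : Type*} [CommRing R] [Group G] [Ring Λ] [Algebra R Λ]
    (H : Subgroup G) (ρ : H →* (Λ ≃ₐ[R] Λ))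
    (T : Set G)
    (htrans : ∀ g : G, ∃! t : T, (t : G)⁻¹ * g ∈ H)
    (j : G → T → T) (h : G → T → H)
    (hjh : ∀ (g : G) (t : T), g * (t : G) = (j g t : G) * ((h g t : G)))
    (β : G → (↥T →₀ Λ) → (↥T →₀ Λ))
    (hβ : ∀ (g : G) (f : ↥T →₀ Λ),
      β g f = f.sum fun t lam => Finsupp.single (j g t) (ρ (h g t) lam)) :
    (∀ f : ↥T →₀ Λ, β 1 f = f) ∧
    ∀ (g t : G) (f : ↥T →₀ Λ), β g (β t f) = β (g * t) f := by
  refine ⟨fun f => ?_, fun g g' f => ?_⟩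
  · simp only [hβ, (transversal_factor_one htrans hjh _).1, (transversal_factor_one htrans hjh _).2,
      map_one, AlgEquiv.one_apply, Finsupp.sum_single]
  · rw [hβ, hβ, hβ, Finsupp.sum_sum_single_sum_single]
    refine Finsupp.sum_congr fun t _ => ?_
    obtain ⟨hj, hh⟩ := transversal_factor_mul htrans hjh g g' t
    rw [hj, hh, map_mul, AlgEquiv.mul_apply]

/-- Let `H ≤ G` act globally on the unital `R`-algebra `Λ` via
`ρ`, let `T` be a left transversal of `H` in `G` with `1 ∈ T`, and factor
`g * t = j g t * h g t` with `j g t ∈ T`, `h g t ∈ H`. On `Γ = ⨁_{t ∈ T} Λ`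
let `β g` send `single t λ` to `single (j g t) (ρ (h g t) λ)`. Then `β 1` is the
identity of `Γ` and `β g ∘ β t = β (g * t)` for all `g t : G`; that is, `β`
defines a global action of `G` on `Γ`. -/
theorem statement7 {R G Λ : Type*} [CommRing R] [Group G] [Ring Λ] [Algebra R Λ]
    (H : Subgroup G) (ρ : H →* (Λ ≃ₐ[R] Λ))
    (T : Set G) (h1T : (1 : G) ∈ T)
    (htrans : ∀ g : G, ∃! t : T, (t : G)⁻¹ * g ∈ H)
    (j : G → T → T) (h : G → T → H)
    (hjh : ∀ (g : G) (t : T), g * (t : G) = (j g t : G) * ((h g t : G)))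
    (β : G → (↥T →₀ Λ) → (↥T →₀ Λ))
    (hβ : ∀ (g : G) (f : ↥T →₀ Λ),
      β g f = f.sum fun t lam => Finsupp.single (j g t) (ρ (h g t) lam)) :
    (∀ f : ↥T →₀ Λ, β 1 f = f) ∧
    ∀ (g t : G) (f : ↥T →₀ Λ), β g (β t f) = β (g * t) f :=
  statement7_general H ρ T htrans j h hjh β hβ
end

section
/- Let Λ be a unital indecomposable R-algebra, n a positive integer, and α a partial action of a group G on Λ^n admitting an enveloping action. Then the set Y = {e_1, …, e_n} of primitive central idempotents of Λ^n (e_i having identity of Λ in the i-th coordinate and 0 elsewhere) is α-invariant: for every g ∈ G, if e_i ∈ S_{g⁻¹} then α_g(e_i) ∈ Y, i.e. α_g(e_i) is again a primitive central idempotent of Λ^n. -/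
/-!
On its domain `S g⁻¹`, `θ g` is a ring isomorphism onto the ideal `S g`, so it sends central
idempotents to central idempotents, and central idempotents below `θ g e` lie in `S g` and are
pulled back by `θ g⁻¹` to central idempotents below `e`. Hence `θ g` preserves primitive central
idempotents. When `Λ` is indecomposable, the coordinates of a central idempotent of `Λⁿ` are `0`
or `1`, so the primitive ones are exactly the `eⱼ`.
-/

/-- A partial action of a group `G` on an `R`-algebra `Λ`: a family of ideals
`S g` of `Λ` together with `R`-algebra isomorphisms `θ g : S g⁻¹ → S g`
(encoded as total maps `Λ → Λ`, whose behaviour is constrained only on `S (g⁻¹)`),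
such that `S 1 = Λ`, `θ 1 = id`, the preimage under `θ h` of `S h ∩ S (g⁻¹)`
lies in `S ((g*h)⁻¹)`, and `θ g ∘ θ h = θ (g*h)` on that preimage. -/
structure IsPartialAction (R : Type*) (G : Type*) (Λ : Type*)
    [CommRing R] [Group G] [Ring Λ] [Algebra R Λ]
    (S : G → Set Λ) (θ : G → Λ → Λ) : Prop where
  zero_mem : ∀ g : G, (0 : Λ) ∈ S g
  add_mem : ∀ g : G, ∀ x ∈ S g, ∀ y ∈ S g, x + y ∈ S g
  neg_mem : ∀ g : G, ∀ x ∈ S g, -x ∈ S g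
  smul_mem : ∀ (g : G) (r : R), ∀ x ∈ S g, r • x ∈ S g
  mul_mem_left : ∀ (g : G) (a : Λ), ∀ x ∈ S g, a * x ∈ S g
  mul_mem_right : ∀ (g : G) (a : Λ), ∀ x ∈ S g, x * a ∈ S g
  maps_to : ∀ g : G, ∀ x ∈ S (g⁻¹), θ g x ∈ S g
  map_add : ∀ g : G, ∀ x ∈ S (g⁻¹), ∀ y ∈ S (g⁻¹), θ g (x + y) = θ g x + θ g y
  map_mul : ∀ g : G, ∀ x ∈ S (g⁻¹), ∀ y ∈ S (g⁻¹), θ g (x * y) = θ g x * θ g y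
  map_smul : ∀ (g : G) (r : R), ∀ x ∈ S (g⁻¹), θ g (r • x) = r • θ g x
  injOn : ∀ g : G, Set.InjOn (θ g) (S (g⁻¹))
  surjOn : ∀ g : G, Set.SurjOn (θ g) (S (g⁻¹)) (S g)
  S_one : S (1 : G) = Set.univ
  one_act : ∀ x : Λ, θ 1 x = x
  dom_comp : ∀ g h : G, ∀ x ∈ S (h⁻¹), θ h x ∈ S h ∩ S (g⁻¹) → x ∈ S ((g * h)⁻¹)
  comp : ∀ g h : G, ∀ x ∈ S (h⁻¹), θ h x ∈ S h ∩ S (g⁻¹) → θ g (θ h x) = θ (g * h) x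

universe u v w

/-- The partial action `(S, θ)` of `G` on the `R`-algebra `Λ` admits an
enveloping action: there is a (possibly non-unital) `R`-algebra `L`, a global
action `β` of `G` on `L`, and an embedding `φ : Λ → L` making `(L, β, φ)` an
enveloping action of `(S, θ)`. -/
def HasEnvelopingAction (R : Type u) (G : Type v) (Λ : Type w)
    [CommRing R] [Group G] [Ring Λ] [Algebra R Λ]
    (S : G → Set Λ) (θ : G → Λ → Λ) : Prop :=
  ∃ (L : Type (max v w)) (iL : NonUnitalNonAssocSemiring L)
    (mL : @Module R L _ iL.toAddCommMonoid) (β : G → L → L) (φ : Λ → L),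
    @IsEnvelopingAction R G Λ L _ _ _ _ iL mL S θ β φ

def IsIndecomposable (Λ : Type*) [Ring Λ] : Prop :=
  ∀ a : Λ, IsIdempotentElem a → a ∈ Set.center Λ → a = 0 ∨ a = 1

variable {Λ : Type*} [Ring Λ]

/-- Stated via central idempotents below `e` rather than orthogonal decompositions: if `b * e = b`
then `e = b + (e - b)` with `b * (e - b) = 0`, and conversely. -/
structure IsPrimitiveCentralIdempotent (e : Λ) : Prop where
  ne_zero : e ≠ 0
  isIdempotentElem : IsIdempotentElem e
  mem_center : e ∈ Set.center Λ
  eq_zero_or_eq : ∀ b : Λ, IsIdempotentElem b → b ∈ Set.center Λ → b * e = b → b = 0 ∨ b = e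

namespace IsPartialAction

variable {R G : Type*} [CommRing R] [Group G] [Algebra R Λ] {S : G → Set Λ} {θ : G → Λ → Λ}

theorem map_zero (hpa : IsPartialAction R G Λ S θ) (g : G) : θ g 0 = 0 := by
  have h := hpa.map_add g 0 (hpa.zero_mem _) 0 (hpa.zero_mem _)
  rwa [add_zero, left_eq_add] at h

theorem map_inv_mem (hpa : IsPartialAction R G Λ S θ) {g : G} {y : Λ} (hy : y ∈ S g) :
    θ g⁻¹ y ∈ S g⁻¹ :=
  hpa.maps_to g⁻¹ y (by rwa [inv_inv])

theorem map_map_inv (hpa : IsPartialAction R G Λ S θ) {g : G} {y : Λ} (hy : y ∈ S g) :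
    θ g (θ g⁻¹ y) = y := by
  have hx := hpa.map_inv_mem hy
  rw [hpa.comp g g⁻¹ y (by rwa [inv_inv]) ⟨hx, hx⟩, mul_inv_cancel, hpa.one_act]

theorem map_isIdempotentElem (hpa : IsPartialAction R G Λ S θ) {g : G} {c : Λ}
    (hc : c ∈ S g⁻¹) (hidem : IsIdempotentElem c) : IsIdempotentElem (θ g c) := by
  rw [IsIdempotentElem, ← hpa.map_mul g c hc c hc, hidem.eq]

/-- Both `θ g c * x` and `x * θ g c` equal `θ g c * x * θ g c`; this is checked on their
preimages in `S g⁻¹`, where `c` is central. -/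
theorem map_mem_center (hpa : IsPartialAction R G Λ S θ) {g : G} {c : Λ} (hc : c ∈ S g⁻¹)
    (hidem : IsIdempotentElem c) (hcent : c ∈ Set.center Λ) : θ g c ∈ Set.center Λ := by
  rw [Semigroup.mem_center_iff] at hcent ⊢
  intro x
  set f := θ g c
  have hf : f ∈ S g := hpa.maps_to g c hc
  have hff : f * f = f := hpa.map_isIdempotentElem hc hidem
  obtain ⟨a, ha, hfa⟩ := hpa.surjOn g (hpa.mul_mem_right g x f hf)
  obtain ⟨b, hb, hfb⟩ := hpa.surjOn g (hpa.mul_mem_left g x f hf)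
  have hca : c * a = a := hpa.injOn g (hpa.mul_mem_left g⁻¹ c a ha) ha <| by
    rw [hpa.map_mul g c hc a ha, hfa, ← mul_assoc, hff]
  have hbc : b * c = b := hpa.injOn g (hpa.mul_mem_right g⁻¹ c b hb) hb <| by
    rw [hpa.map_mul g b hb c hc, hfb, mul_assoc, hff]
  calc x * f = θ g (c * b) := by rw [← hcent b, hbc, hfb]
    _ = f * x * f := by rw [hpa.map_mul g c hc b hb, hfb, mul_assoc]
    _ = θ g (a * c) := by rw [hpa.map_mul g a ha c hc, hfa]
    _ = f * x := by rw [hcent a, hca, hfa]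

theorem map_isPrimitiveCentralIdempotent (hpa : IsPartialAction R G Λ S θ) {g : G} {e : Λ}
    (he : e ∈ S g⁻¹) (hprim : IsPrimitiveCentralIdempotent e) :
    IsPrimitiveCentralIdempotent (θ g e) where
  ne_zero h := hprim.ne_zero <| hpa.injOn g he (hpa.zero_mem _) (by rw [h, hpa.map_zero])
  isIdempotentElem := hpa.map_isIdempotentElem he hprim.isIdempotentElem
  mem_center := hpa.map_mem_center he hprim.isIdempotentElem hprim.mem_center
  eq_zero_or_eq b hidem hcent hle := by
    have hb : b ∈ S g := hle ▸ hpa.mul_mem_left g b _ (hpa.maps_to g e he)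
    set a := θ g⁻¹ b
    have ha : a ∈ S g⁻¹ := hpa.map_inv_mem hb
    have hab : θ g a = b := hpa.map_map_inv hb
    have hb' : b ∈ S g⁻¹⁻¹ := by rwa [inv_inv]
    have hale : a * e = a := hpa.injOn g (hpa.mul_mem_right g⁻¹ e a ha) ha <| by
      rw [hpa.map_mul g a ha e he, hab, hle]
    rcases hprim.eq_zero_or_eq a (hpa.map_isIdempotentElem hb' hidem)
        (hpa.map_mem_center hb' hidem hcent) hale with h | h
    · exact .inl (by rw [← hab, h, hpa.map_zero])
    · exact .inr (by rw [← hab, h])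

end IsPartialAction

section Pi

variable {ι : Type*} [DecidableEq ι]

theorem Pi.single_one_isPrimitiveCentralIdempotent [Nontrivial Λ] (hΛ : IsIndecomposable Λ)
    (i : ι) : IsPrimitiveCentralIdempotent (Pi.single i 1 : ι → Λ) where
  ne_zero := by simp
  isIdempotentElem := by rw [IsIdempotentElem, ← Pi.single_mul, one_mul]
  mem_center := by
    rw [Set.center_pi]
    intro k _
    rcases eq_or_ne k i with rfl | hk
    · simp [Set.one_mem_center]
    · simp [hk, Set.zero_mem_center]
  eq_zero_or_eq b hidem hcent hle := by
    have hb : b = Pi.single i (b i) := by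
      rw [← mul_one (b i), Pi.single_mul_right, hle]
    rw [Set.center_pi] at hcent
    rcases hΛ (b i) (congrFun hidem i) (hcent i trivial) with h | h
    · exact .inl (by rw [hb, h, Pi.single_zero])
    · exact .inr (by rw [hb, h])

theorem IsPrimitiveCentralIdempotent.eq_single_one [Nontrivial Λ] (hΛ : IsIndecomposable Λ)
    {f : ι → Λ} (hf : IsPrimitiveCentralIdempotent f) : ∃ j, f = Pi.single j 1 := by
  have hcent := hf.mem_center
  rw [Set.center_pi] at hcent
  have hcoord : ∀ k, f k = 0 ∨ f k = 1 := fun k =>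
    hΛ (f k) (congrFun hf.isIdempotentElem k) (hcent k trivial)
  obtain ⟨j, hj⟩ : ∃ j, f j = 1 := by
    by_contra! h
    exact hf.ne_zero (funext fun k => (hcoord k).resolve_right (h k))
  have hle : Pi.single j 1 * f = Pi.single j 1 := by rw [← Pi.single_mul_left, hj, one_mul]
  have hprim := Pi.single_one_isPrimitiveCentralIdempotent hΛ j
  exact ⟨j, ((hf.eq_zero_or_eq _ hprim.isIdempotentElem hprim.mem_center hle).resolve_left
    hprim.ne_zero).symm⟩

end Pi

theorem statement11_general {R : Type u} {G : Type v} {Λ : Type w}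
    [CommRing R] [Group G] [Ring Λ] [Algebra R Λ]
    (hindec : ∀ a : Λ, a * a = a → (∀ x : Λ, a * x = x * a) → a = 0 ∨ a = 1)
    (n : ℕ)
    (S : G → Set (Fin n → Λ)) (θ : G → (Fin n → Λ) → (Fin n → Λ))
    (hpa : IsPartialAction R G (Fin n → Λ) S θ) :
    ∀ (g : G) (i : Fin n), Pi.single i (1 : Λ) ∈ S (g⁻¹) →
      ∃ j : Fin n, θ g (Pi.single i (1 : Λ)) = Pi.single j (1 : Λ) := by
  intro g i hi
  have hΛ : IsIndecomposable Λ := fun a hidem hcent =>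
    hindec a hidem fun x => ((Semigroup.mem_center_iff.mp hcent) x).symm
  cases subsingleton_or_nontrivial Λ
  · exact ⟨i, Subsingleton.elim _ _⟩
  · exact (hpa.map_isPrimitiveCentralIdempotent hi
      (Pi.single_one_isPrimitiveCentralIdempotent hΛ i)).eq_single_one hΛ

/-- Let `Λ` be a unital indecomposable `R`-algebra and `α` a
partial action of `G` on `Λ^n` admitting an enveloping action. Then the set of
primitive central idempotents `{e_1, …, e_n}` (where `e_i = Pi.single i 1`) is
`α`-invariant: if `e_i ∈ S (g⁻¹)` then `α_g e_i` is again some `e_j`. -/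
theorem statement11 {R : Type u} {G : Type v} {Λ : Type w}
    [CommRing R] [Group G] [Ring Λ] [Algebra R Λ]
    (hindec : ∀ a : Λ, a * a = a → (∀ x : Λ, a * x = x * a) → a = 0 ∨ a = 1)
    (n : ℕ) (hn : 0 < n)
    (S : G → Set (Fin n → Λ)) (θ : G → (Fin n → Λ) → (Fin n → Λ))
    (hpa : IsPartialAction R G (Fin n → Λ) S θ)
    (hglob : HasEnvelopingAction R G (Fin n → Λ) S θ) :
    ∀ (g : G) (i : Fin n), Pi.single i (1 : Λ) ∈ S (g⁻¹) →
      ∃ j : Fin n, θ g (Pi.single i (1 : Λ)) = Pi.single j (1 : Λ) :=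
  statement11_general hindec n S θ hpa
end

section
/- Let Λ be a nonzero unital indecomposable R-algebra, n a positive integer, and let α and α' be partial actions of a group G on Λ^n whose enveloping algebras are isomorphic to Λ^m and Λ^{m'} respectively (finite products of copies of Λ). Assume that α and α' induce the same partial action on the set {e_1, …, e_n} of primitive central idempotents of Λ^n, i.e. for every g ∈ G, e_i ∈ S^α_{g⁻¹} if and only if e_i ∈ S^{α'}_{g⁻¹}, and α_g(e_i) = α'_g(e_i) for every such e_i. Then m = m'. -/
/-! The primitive central idempotents of `Λ^k` are exactly the `e_j`, because `Λ` is
indecomposable. An injective ring map onto an ideal preserves primitive central idempotents,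
so in the globalization `L ≅ Λ^m` every `β_g(e_i)` is some `e_j`, and since the `β_g(Λ^n)`
add up to `L`, every `e_j` arises this way. Moreover `β_g(e_i) = β_h(e_l)` exactly when
`θ_{h⁻¹g}` is defined at `e_i` and sends it to `e_l`. Hence `m` is the number of classes of
`G × {1, …, n}` under a relation that only depends on how the partial action moves the
`e_i`, so it is the same for `α` and `α'`. -/

open Function

structure IsPrimitiveCentralIdempotent_s13 {A : Type*} [Mul A] [Zero A] (c : A) : Prop where
  ne_zero : c ≠ 0
  mul_self : c * c = c
  comm : ∀ z, c * z = z * c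
  eq_zero_or_eq : ∀ d, d * d = d → (∀ z, d * z = z * d) → d * c = d → d = 0 ∨ d = c

theorem IsPrimitiveCentralIdempotent_s13.map {A B : Type*} [NonUnitalNonAssocSemiring A]
    [NonUnitalSemiring B] {f : A →ₙ+* B} (hf : Injective f)
    (hl : ∀ a y, ∃ y', a * f y = f y') (hr : ∀ a y, ∃ y', f y * a = f y') {e : A}
    (he : IsPrimitiveCentralIdempotent_s13 e) : IsPrimitiveCentralIdempotent_s13 (f e) where
  ne_zero := (map_ne_zero_iff f hf).mpr he.ne_zero
  mul_self := by rw [← map_mul, he.mul_self]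
  comm z := by
    obtain ⟨x, hx⟩ := hl z e
    obtain ⟨y, hy⟩ := hr z e
    have hfe : f e * f e = f e := by rw [← map_mul, he.mul_self]
    -- both sides equal `f e * z * f e`: they lie in `range f`, on which `f e` is central
    calc f e * z = f (e * y) := by rw [map_mul, ← hy, ← mul_assoc, hfe]
      _ = f (y * e) := by rw [he.comm]
      _ = f e * z * f e := by rw [map_mul, hy]
      _ = f (e * x) := by rw [mul_assoc, hx, map_mul]
      _ = f (x * e) := by rw [he.comm]
      _ = z * f e := by rw [map_mul, ← hx, mul_assoc, hfe]
  eq_zero_or_eq d hd hdc hle := by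
    obtain ⟨w, hw⟩ := hl d e
    rw [hle] at hw
    subst hw
    have hw_idem : w * w = w := hf (by rw [map_mul, hd])
    have hw_comm : ∀ a, w * a = a * w := fun a => hf (by rw [map_mul, map_mul, hdc])
    have hwe : w * e = w := hf (by rw [map_mul, hle])
    rcases he.eq_zero_or_eq w hw_idem hw_comm hwe with rfl | rfl
    · exact Or.inl (map_zero f)
    · exact Or.inr rfl

section Pi

theorem Pi.single_one_injective {ι Λ : Type*} [DecidableEq ι] [MulZeroOneClass Λ]
    [Nontrivial Λ] :
    Injective (fun i => (Pi.single i 1 : ι → Λ)) := by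
  intro a b h
  by_contra hab
  simpa [hab] using congrFun h a

variable {Λ : Type*} [Ring Λ]
  (hindec : ∀ a : Λ, a * a = a → (∀ x : Λ, a * x = x * a) → a = 0 ∨ a = 1)
include hindec

theorem Pi.isPrimitiveCentralIdempotent_single_one [Nontrivial Λ] {ι : Type*} [DecidableEq ι]
    (i : ι) : IsPrimitiveCentralIdempotent_s13 (Pi.single i 1 : ι → Λ) where
  ne_zero := by simp
  mul_self := by rw [← Pi.single_mul, mul_one]
  comm z := by ext j; by_cases h : j = i <;> simp [h]
  eq_zero_or_eq d hd hdc hle := by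
    have hd_eq : d = Pi.single i (d i) := by
      ext j
      by_cases h : j = i
      · subst h; simp
      · rw [← hle]; simp [h]
    rcases hindec (d i) (congrFun hd i) (fun x => congrFun (hdc (fun _ => x)) i) with h | h
    · exact Or.inl (by rw [hd_eq, h, Pi.single_zero])
    · exact Or.inr (by rw [hd_eq, h])

theorem Pi.exists_eq_single_one {κ : Type*} [DecidableEq κ] {c : κ → Λ}
    (hc : IsPrimitiveCentralIdempotent_s13 c) : ∃ j, c = Pi.single j 1 := by
  obtain ⟨j, hj⟩ := Function.ne_iff.mp hc.ne_zero
  have hcj : c j = 1 :=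
    (hindec (c j) (congrFun hc.mul_self j)
      (fun x => congrFun (hc.comm (fun _ => x)) j)).resolve_left hj
  refine ⟨j, ((hc.eq_zero_or_eq (Pi.single j 1) ?_ ?_ ?_).resolve_left ?_).symm⟩
  · rw [← Pi.single_mul, mul_one]
  · intro z; ext k; by_cases h : k = j <;> simp [h]
  · ext k; by_cases h : k = j <;> simp [h, hcj]
  · have h10 : (1 : Λ) ≠ 0 := hcj ▸ hj
    intro h
    exact h10 (by simpa using congrFun h j)

theorem exists_map_single_eq_single [Nontrivial Λ] {ι κ : Type*} [DecidableEq ι] [DecidableEq κ]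
    {f : (ι → Λ) →ₙ+* (κ → Λ)} (hf : Injective f)
    (hl : ∀ a y, ∃ y', a * f y = f y') (hr : ∀ a y, ∃ y', f y * a = f y') (i : ι) :
    ∃ j, f (Pi.single i 1) = Pi.single j 1 :=
  Pi.exists_eq_single_one hindec
    ((Pi.isPrimitiveCentralIdempotent_single_one hindec i).map hf hl hr)

end Pi

theorem exists_map_single_eq_single_of_closure_eq_top {Λ X ι κ : Type*} [Ring Λ] [Nontrivial Λ]
    [Fintype ι] [DecidableEq ι] [DecidableEq κ] (f : X → (ι → Λ) →ₙ+* (κ → Λ))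
    (hsingle : ∀ x i, ∃ j, f x (Pi.single i 1) = Pi.single j 1)
    (hspan : AddSubmonoid.closure (⋃ x, Set.range (f x)) = ⊤) (j : κ) :
    ∃ x i, f x (Pi.single i 1) = Pi.single j 1 := by
  by_contra! hmiss
  have hsingle_j : ∀ x i, f x (Pi.single i 1) j = 0 := by
    intro x i
    obtain ⟨j', hj'⟩ := hsingle x i
    have hne : j ≠ j' := by rintro rfl; exact hmiss x i hj'
    rw [hj', Pi.single_eq_of_ne hne]
  -- `f x a = f x 1 * f x a` and `f x 1 = ∑ i, f x eᵢ` vanishes at `j`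
  have hrange_j :
      ⋃ x, Set.range (f x) ⊆ AddMonoidHom.mker (Pi.evalAddMonoidHom (fun _ => Λ) j) := by
    simp only [Set.iUnion_subset_iff, Set.range_subset_iff]
    intro x a
    have hone : f x 1 j = 0 := by
      rw [← Finset.univ_sum_single (1 : ι → Λ), map_sum, Finset.sum_apply]
      exact Finset.sum_eq_zero fun i _ => hsingle_j x i
    change f x a j = 0
    rw [← one_mul a, map_mul, Pi.mul_apply, hone, zero_mul]
  have hmem := AddSubmonoid.closure_le.mpr hrange_j (hspan ▸ AddSubmonoid.mem_top (Pi.single j 1))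
  simp at hmem

noncomputable def Equiv.ofSurjectiveOfFiberIff {X α β : Type*} (p : X → α) (p' : X → β)
    (hp : Surjective p) (hp' : Surjective p') (h : ∀ x y, p x = p y ↔ p' x = p' y) : α ≃ β :=
  (Setoid.quotientKerEquivOfSurjective p hp).symm.trans
    ((Quotient.congr (Equiv.refl X) h).trans (Setoid.quotientKerEquivOfSurjective p' hp'))

-- `(g, i) ~ (h, l)` iff `β_g(e_i) = β_h(e_l)` in any globalization, by
-- `IsEnvelopingAction.β_φ_eq_β_φ_iff`
def translateRel {G Λ ι : Type*} [Group G] [Ring Λ] [DecidableEq ι]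
    (S : G → Set (ι → Λ)) (θ : G → (ι → Λ) → ι → Λ) (x y : G × ι) : Prop :=
  Pi.single x.2 1 ∈ S (y.1⁻¹ * x.1)⁻¹ ∧ θ (y.1⁻¹ * x.1) (Pi.single x.2 1) = Pi.single y.2 1

namespace IsEnvelopingAction

variable {R G Λ L : Type*} [CommRing R] [Group G] [Ring Λ] [Algebra R Λ]
  [NonUnitalNonAssocSemiring L] [Module R L]
  {S : G → Set Λ} {θ : G → Λ → Λ} {β : G → L → L} {φ : Λ → L}
  (henv : IsEnvelopingAction R G Λ L S θ β φ)
include henv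

theorem β_eq_β_iff (g h : G) (x y : L) : β g x = β h y ↔ β (h⁻¹ * g) x = y := by
  constructor
  · intro hxy; rw [← henv.β_comp, hxy, henv.β_comp, inv_mul_cancel, henv.β_one]
  · intro hxy; rw [← hxy, henv.β_comp, mul_inv_cancel_left]

theorem β_φ_eq_φ_iff (k : G) (a b : Λ) : β k (φ a) = φ b ↔ a ∈ S k⁻¹ ∧ θ k a = b := by
  constructor
  · intro hab
    have ha : φ a ∈ φ '' S k⁻¹ := by
      rw [henv.intersect]
      refine ⟨⟨a, rfl⟩, φ b, ⟨b, rfl⟩, ?_⟩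
      rw [← hab, henv.β_comp, inv_mul_cancel, henv.β_one]
    have ha' : a ∈ S k⁻¹ := henv.φ_injective.mem_set_image.mp ha
    exact ⟨ha', henv.φ_injective (by rw [henv.equivariant k a ha', hab])⟩
  · rintro ⟨ha, rfl⟩
    exact (henv.equivariant k a ha).symm

theorem β_φ_eq_β_φ_iff (g h : G) (a b : Λ) :
    β g (φ a) = β h (φ b) ↔ a ∈ S (h⁻¹ * g)⁻¹ ∧ θ (h⁻¹ * g) a = b := by
  rw [henv.β_eq_β_iff, henv.β_φ_eq_φ_iff]

variable {B : Type*} [NonUnitalNonAssocRing B] (E : L ≃+* B)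

def translateHom (g : G) : Λ →ₙ+* B where
  toFun a := E (β g (φ a))
  map_mul' a b := by simp only [henv.φ_mul, henv.β_mul, map_mul]
  map_add' a b := by simp only [henv.φ_add, henv.β_add, map_add]
  map_zero' := by
    have h := congrArg (fun a => E (β g (φ a))) (add_zero (0 : Λ))
    simp only [henv.φ_add, henv.β_add, map_add] at h
    exact left_eq_add.mp h.symm

theorem translateHom_apply (g : G) (a : Λ) : henv.translateHom E g a = E (β g (φ a)) := rfl

theorem translateHom_injective (g : G) : Injective (henv.translateHom E g) :=
  E.injective.comp ((henv.β_bijective g).1.comp henv.φ_injective)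

theorem translateHom_range_mul_left (g : G) (z : B) (y : Λ) :
    ∃ y', z * henv.translateHom E g y = henv.translateHom E g y' := by
  obtain ⟨y', hy'⟩ := henv.ideal_mul_left (β g⁻¹ (E.symm z)) (φ y) ⟨y, rfl⟩
  refine ⟨y', ?_⟩
  simp only [translateHom_apply, hy', henv.β_mul, henv.β_comp, mul_inv_cancel, henv.β_one,
    map_mul, RingEquiv.apply_symm_apply]

theorem translateHom_range_mul_right (g : G) (z : B) (y : Λ) :
    ∃ y', henv.translateHom E g y * z = henv.translateHom E g y' := by
  obtain ⟨y', hy'⟩ := henv.ideal_mul_right (β g⁻¹ (E.symm z)) (φ y) ⟨y, rfl⟩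
  refine ⟨y', ?_⟩
  simp only [translateHom_apply, hy', henv.β_mul, henv.β_comp, mul_inv_cancel, henv.β_one,
    map_mul, RingEquiv.apply_symm_apply]

theorem closure_range_translateHom :
    AddSubmonoid.closure (⋃ g, Set.range (henv.translateHom E g)) = ⊤ := by
  have hrange :
      ⋃ g, Set.range (henv.translateHom E g) = (E : L →+ B) '' ⋃ g, β g '' Set.range φ := by
    simp only [Set.image_iUnion, ← Set.range_comp]
    rfl
  rw [hrange, ← AddMonoidHom.map_mclosure, henv.spans, ← AddMonoidHom.mrange_eq_map,
    AddMonoidHom.mrange_eq_top]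
  exact E.surjective

end IsEnvelopingAction

theorem IsEnvelopingAction.exists_surjective_fiber_iff_translateRel {R G Λ L : Type*} [CommRing R]
    [Group G] [Ring Λ] [Nontrivial Λ] [Algebra R Λ] [NonUnitalNonAssocSemiring L] [Module R L]
    (hindec : ∀ a : Λ, a * a = a → (∀ x : Λ, a * x = x * a) → a = 0 ∨ a = 1)
    {ι κ : Type*} [Fintype ι] [DecidableEq ι] [DecidableEq κ]
    {S : G → Set (ι → Λ)} {θ : G → (ι → Λ) → ι → Λ} {β : G → L → L} {φ : (ι → Λ) → L}
    (henv : IsEnvelopingAction R G (ι → Λ) L S θ β φ) (E : L ≃+* (κ → Λ)) :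
    ∃ p : G × ι → κ, Surjective p ∧ ∀ x y, p x = p y ↔ translateRel S θ x y := by
  have hsingle (g : G) (i : ι) := exists_map_single_eq_single hindec
    (henv.translateHom_injective E g) (henv.translateHom_range_mul_left E g)
    (henv.translateHom_range_mul_right E g) i
  choose p hp using hsingle
  refine ⟨fun x => p x.1 x.2, ?_, ?_⟩
  · intro j
    obtain ⟨g, i, h⟩ := exists_map_single_eq_single_of_closure_eq_top _
      (fun g i => ⟨p g i, hp g i⟩) (henv.closure_range_translateHom E) j
    exact ⟨(g, i), Pi.single_one_injective ((hp g i).symm.trans h)⟩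
  · intro x y
    change p x.1 x.2 = p y.1 y.2 ↔ _
    rw [← (Pi.single_one_injective (Λ := Λ)).eq_iff, ← hp, ← hp, henv.translateHom_apply,
      henv.translateHom_apply, E.injective.eq_iff, henv.β_φ_eq_β_φ_iff]
    rfl

theorem statement13_general {R G Λ L L' : Type*} [CommRing R] [Group G]
    [Ring Λ] [Algebra R Λ] [Nontrivial Λ]
    [NonUnitalNonAssocSemiring L] [Module R L]
    [NonUnitalNonAssocSemiring L'] [Module R L']
    (hindec : ∀ a : Λ, a * a = a → (∀ x : Λ, a * x = x * a) → a = 0 ∨ a = 1)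
    (n : ℕ)
    (S : G → Set (Fin n → Λ)) (θ : G → (Fin n → Λ) → (Fin n → Λ))
    (β : G → L → L) (φ : (Fin n → Λ) → L)
    (henv : IsEnvelopingAction R G (Fin n → Λ) L S θ β φ)
    (m : ℕ) (F : L ≃ (Fin m → Λ))
    (hF : (∀ x y : L, F (x + y) = F x + F y) ∧
      (∀ x y : L, F (x * y) = F x * F y) ∧
      (∀ (r : R) (x : L), F (r • x) = r • F x))
    (S' : G → Set (Fin n → Λ)) (θ' : G → (Fin n → Λ) → (Fin n → Λ))
    (β' : G → L' → L') (φ' : (Fin n → Λ) → L')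
    (henv' : IsEnvelopingAction R G (Fin n → Λ) L' S' θ' β' φ')
    (m' : ℕ) (F' : L' ≃ (Fin m' → Λ))
    (hF' : (∀ x y : L', F' (x + y) = F' x + F' y) ∧
      (∀ x y : L', F' (x * y) = F' x * F' y) ∧
      (∀ (r : R) (x : L'), F' (r • x) = r • F' x))
    (hsame : ∀ (g : G) (i : Fin n),
      (Pi.single i (1 : Λ) ∈ S (g⁻¹) ↔ Pi.single i (1 : Λ) ∈ S' (g⁻¹)) ∧
      (Pi.single i (1 : Λ) ∈ S (g⁻¹) →
        θ g (Pi.single i (1 : Λ)) = θ' g (Pi.single i (1 : Λ)))) :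
    m = m' := by
  obtain ⟨p, hp, hp_fiber⟩ := henv.exists_surjective_fiber_iff_translateRel hindec
    { F with map_add' := hF.1, map_mul' := hF.2.1 }
  obtain ⟨p', hp', hp'_fiber⟩ := henv'.exists_surjective_fiber_iff_translateRel hindec
    { F' with map_add' := hF'.1, map_mul' := hF'.2.1 }
  have hrel (x y : G × Fin n) : translateRel S θ x y ↔ translateRel S' θ' x y := by
    obtain ⟨hS, hθ⟩ := hsame (y.1⁻¹ * x.1) x.2
    constructor
    · rintro ⟨hx, hxy⟩
      exact ⟨hS.mp hx, by rwa [← hθ hx]⟩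
    · rintro ⟨hx, hxy⟩
      exact ⟨hS.mpr hx, by rwa [hθ (hS.mpr hx)]⟩
  exact Fin.equiv_iff_eq.mp
    ⟨Equiv.ofSurjectiveOfFiberIff p p' hp hp' fun x y => by rw [hp_fiber, hp'_fiber, hrel]⟩

/-- Let `Λ` be a nonzero unital indecomposable `R`-algebra and
let `α`, `α'` be partial actions of `G` on `Λ^n` whose enveloping algebras are
isomorphic to `Λ^m` and `Λ^{m'}` respectively. If `α` and `α'` induce the same
partial action on the set of primitive central idempotents `{e_1, …, e_n}`
(where `e_i = Pi.single i 1`), then `m = m'`. -/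
theorem statement13 {R G Λ L L' : Type*} [CommRing R] [Group G]
    [Ring Λ] [Algebra R Λ] [Nontrivial Λ]
    [NonUnitalNonAssocSemiring L] [Module R L]
    [NonUnitalNonAssocSemiring L'] [Module R L']
    (hindec : ∀ a : Λ, a * a = a → (∀ x : Λ, a * x = x * a) → a = 0 ∨ a = 1)
    (n : ℕ) (hn : 0 < n)
    (S : G → Set (Fin n → Λ)) (θ : G → (Fin n → Λ) → (Fin n → Λ))
    (hpa : IsPartialAction R G (Fin n → Λ) S θ)
    (β : G → L → L) (φ : (Fin n → Λ) → L)
    (henv : IsEnvelopingAction R G (Fin n → Λ) L S θ β φ)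
    (m : ℕ) (F : L ≃ (Fin m → Λ))
    (hF : (∀ x y : L, F (x + y) = F x + F y) ∧
      (∀ x y : L, F (x * y) = F x * F y) ∧
      (∀ (r : R) (x : L), F (r • x) = r • F x))
    (S' : G → Set (Fin n → Λ)) (θ' : G → (Fin n → Λ) → (Fin n → Λ))
    (hpa' : IsPartialAction R G (Fin n → Λ) S' θ')
    (β' : G → L' → L') (φ' : (Fin n → Λ) → L')
    (henv' : IsEnvelopingAction R G (Fin n → Λ) L' S' θ' β' φ')
    (m' : ℕ) (F' : L' ≃ (Fin m' → Λ))
    (hF' : (∀ x y : L', F' (x + y) = F' x + F' y) ∧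
      (∀ x y : L', F' (x * y) = F' x * F' y) ∧
      (∀ (r : R) (x : L'), F' (r • x) = r • F' x))
    (hsame : ∀ (g : G) (i : Fin n),
      (Pi.single i (1 : Λ) ∈ S (g⁻¹) ↔ Pi.single i (1 : Λ) ∈ S' (g⁻¹)) ∧
      (Pi.single i (1 : Λ) ∈ S (g⁻¹) →
        θ g (Pi.single i (1 : Λ)) = θ' g (Pi.single i (1 : Λ)))) :
    m = m' :=
  statement13_general hindec n S θ β φ henv m F hF S' θ' β' φ' henv' m' F' hF' hsame
end
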